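/- Let R be a unital ring and M, N R-bimodules. There is an isomorphism of T_R(M)-bimodules between the degree-one-in-N part of T_R(M ⊕ N) (the direct sum of all tensor words in M and N containing exactly one N-factor) and T_R(M) ⊗_R N ⊗_R T_R(M). -/

import Mathlib

open TensorProduct

/-!
Write `A = T_R(M)`, `T = T_R(M ⊕ N)` and `P = (A ⊗ N) ⊗ A`. The multiplication map
`μ : P → T` has a linear left inverse, so it is injective. To build it, let `T` act on `A × P`:
`m ∈ M` acts by left multiplication by `m` on both factors, and `n ∈ N` sends `(x, u)` to
`(0, (1 ⊗ n) ⊗ x)`. Then `a·n·b` sends `(1, 0)` to `(0, (a ⊗ n) ⊗ b)`, so the second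
component of the action on `(1, 0)` inverts `μ`.
-/

/-- The inclusion `T_R(M) → T_R(M ⊕ N)` induced by `M → M ⊕ N`. -/
noncomputable def inclTensorAlg (R M N : Type*) [CommRing R]
    [AddCommGroup M] [Module R M] [AddCommGroup N] [Module R N] :
    TensorAlgebra R M →ₐ[R] TensorAlgebra R (M × N) :=
  TensorAlgebra.lift R ((TensorAlgebra.ι R).comp (LinearMap.inl R M N))

theorem TensorProduct.span_tmul_tmul_eq_top (R M N P : Type*) [CommSemiring R]
    [AddCommMonoid M] [Module R M] [AddCommMonoid N] [Module R N]
    [AddCommMonoid P] [Module R P] :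
    Submodule.span R {t : (M ⊗[R] N) ⊗[R] P | ∃ m n p, (m ⊗ₜ n) ⊗ₜ p = t} = ⊤ := by
  rw [eq_top_iff]
  rintro t -
  induction t using TensorProduct.induction_on with
  | zero => exact zero_mem _
  | tmul x p =>
    induction x using TensorProduct.induction_on with
    | zero => simp
    | tmul m n => exact Submodule.subset_span ⟨m, n, p, rfl⟩
    | add x y hx hy => rw [add_tmul]; exact add_mem hx hy
  | add x y hx hy => exact add_mem hx hy

namespace TensorAlgebra

variable (R M N : Type*) [CommRing R] [AddCommGroup M] [Module R M] [AddCommGroup N] [Module R N]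

local notation "A" => TensorAlgebra R M
local notation "T" => TensorAlgebra R (M × N)
local notation "P" => (TensorAlgebra R M ⊗[R] N) ⊗[R] TensorAlgebra R M

noncomputable def degOneMul : P →ₗ[R] T :=
  LinearMap.mul' R T ∘ₗ TensorProduct.map
    (LinearMap.mul' R T ∘ₗ TensorProduct.map (inclTensorAlg R M N).toLinearMap
      (ι R ∘ₗ LinearMap.inr R M N))
    (inclTensorAlg R M N).toLinearMap

variable {R M N}

@[simp]
theorem degOneMul_tmul (a b : A) (n : N) :
    degOneMul R M N ((a ⊗ₜ n) ⊗ₜ b) =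
      inclTensorAlg R M N a * ι R ((0 : M), n) * inclTensorAlg R M N b := rfl

theorem range_degOneMul : LinearMap.range (degOneMul R M N) = Submodule.span R
    {x : T | ∃ (a b : A) (n : N),
      x = inclTensorAlg R M N a * ι R ((0 : M), n) * inclTensorAlg R M N b} := by
  rw [LinearMap.range_eq_map, ← TensorProduct.span_tmul_tmul_eq_top, Submodule.map_span]
  congr 1
  ext x
  constructor
  · rintro ⟨_, ⟨a, n, b, rfl⟩, rfl⟩
    exact ⟨a, b, n, rfl⟩
  · rintro ⟨a, b, n, rfl⟩
    exact ⟨_, ⟨a, n, b, rfl⟩, rfl⟩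

variable (R M N) in
noncomputable def degOneActionOnGenerators : M × N →ₗ[R] Module.End R (A × P) :=
  LinearMap.coprod
    { toFun := fun m => LinearMap.prodMap (LinearMap.mulLeft R (ι R m))
        (DistribSMul.toLinearMap R P (ι R m))
      map_add' := by intros; ext <;> simp [add_mul, add_smul]
      map_smul' := by intros; ext <;> simp [smul_assoc] }
    { toFun := fun n =>
        LinearMap.inr R A P ∘ₗ TensorProduct.mk R _ A ((1 : A) ⊗ₜ n) ∘ₗ LinearMap.fst R A P
      map_add' := by intros; ext <;> simp [tmul_add]
      map_smul' := by intros; ext <;> simp [tmul_smul, smul_tmul'] }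

variable (R M N) in
noncomputable def degOneAction : T →ₐ[R] Module.End R (A × P) :=
  lift R (degOneActionOnGenerators R M N)

theorem degOneAction_incl (a x : A) (u : P) :
    degOneAction R M N (inclTensorAlg R M N a) (x, u) = (a * x, a • u) := by
  induction a using TensorAlgebra.induction generalizing x u with
  | algebraMap r => simp [Algebra.algebraMap_eq_smul_one, smul_assoc]
  | ι m => simp [inclTensorAlg, degOneAction, degOneActionOnGenerators]
  | mul a b ha hb => simp [Module.End.mul_apply, ha, hb, mul_assoc, mul_smul]
  | add a b ha hb => simp [ha, hb, add_mul, add_smul]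

theorem degOneAction_ι_inr (n : N) (x : A) (u : P) :
    degOneAction R M N (ι R ((0 : M), n)) (x, u) = (0, ((1 : A) ⊗ₜ n) ⊗ₜ x) := by
  simp [degOneAction, degOneActionOnGenerators]

variable (R M N) in
noncomputable def degOneRetract : T →ₗ[R] P :=
  LinearMap.snd R A P ∘ₗ LinearMap.applyₗ ((1 : A), (0 : P)) ∘ₗ
    (degOneAction R M N).toLinearMap

theorem degOneRetract_comp_degOneMul :
    degOneRetract R M N ∘ₗ degOneMul R M N = LinearMap.id := by
  refine TensorProduct.ext_threefold fun a n b => ?_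
  simp [degOneRetract, Module.End.mul_apply, degOneAction_incl, degOneAction_ι_inr, smul_tmul']

theorem degOneMul_injective : Function.Injective (degOneMul R M N) :=
  LinearMap.injective_of_comp_eq_id _ _ degOneRetract_comp_degOneMul

end TensorAlgebra

/-- For `R` a unital ring and `M`, `N` `R`-bimodules, the degree-one-in-`N` part of
`T_R(M ⊕ N)` (the span of all tensor words with exactly one `N`-factor, i.e. of the
elements `a·n·b` with `a, b ∈ T_R(M)`, `n ∈ N`) is isomorphic, compatibly with the
`T_R(M)`-bimodule structures (concatenation on the left and right), to
`T_R(M) ⊗_R N ⊗_R T_R(M)`: the multiplication map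
`μ : (T_R(M) ⊗ N) ⊗ T_R(M) → T_R(M ⊕ N)`, `a ⊗ n ⊗ b ↦ a·n·b`, is injective with
range the degree-one part. -/
theorem stmt15 {R M N : Type*} [CommRing R]
    [AddCommGroup M] [Module R M] [AddCommGroup N] [Module R N] :
    ∃ μ : (TensorAlgebra R M ⊗[R] N) ⊗[R] TensorAlgebra R M →ₗ[R] TensorAlgebra R (M × N),
      (∀ (a b : TensorAlgebra R M) (n : N),
        μ ((a ⊗ₜ[R] n) ⊗ₜ[R] b) =
          inclTensorAlg R M N a * TensorAlgebra.ι R ((0 : M), n) * inclTensorAlg R M N b) ∧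
      Function.Injective μ ∧
      LinearMap.range μ = Submodule.span R {x : TensorAlgebra R (M × N) |
        ∃ (a b : TensorAlgebra R M) (n : N),
          x = inclTensorAlg R M N a * TensorAlgebra.ι R ((0 : M), n) * inclTensorAlg R M N b} ∧
      -- compatibility with the `T_R(M)`-bimodule structures
      (∀ (t a b : TensorAlgebra R M) (n : N),
        μ (((t * a) ⊗ₜ[R] n) ⊗ₜ[R] b) = inclTensorAlg R M N t * μ ((a ⊗ₜ[R] n) ⊗ₜ[R] b) ∧
        μ ((a ⊗ₜ[R] n) ⊗ₜ[R] (b * t)) = μ ((a ⊗ₜ[R] n) ⊗ₜ[R] b) * inclTensorAlg R M N t) := by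
  refine ⟨TensorAlgebra.degOneMul R M N, TensorAlgebra.degOneMul_tmul,
    TensorAlgebra.degOneMul_injective, TensorAlgebra.range_degOneMul,
    fun t a b n => ⟨?_, ?_⟩⟩ <;> simp [mul_assoc]
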